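/- arXiv:1610.08217 — 6 statements merged into one kernel-verified Lean document; each statement's English description precedes it below -/
import Mathlib

section
/- (Theorem 1(i)) For every integer g ≥ 1, the spectral radius of the g-th-order non-backtracking matrix of G is at most that of the (g−1)-th-order one: ρ(B^(g)) ≤ ρ(B^(g−1)). -/
open Matrix ENNReal

namespace PercNB

variable {V : Type*} [Fintype V] [DecidableEq V]

/-- `p : Fin (g+1) → V` is a length-`g` directed path in the simple graph `G`:
`g+1` pairwise distinct vertices with consecutive vertices adjacent. -/
def IsDiPath (G : SimpleGraph V) (g : ℕ) (p : Fin (g+1) → V) : Prop :=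
  Function.Injective p ∧ ∀ k : Fin g, G.Adj (p k.castSucc) (p k.succ)

instance (G : SimpleGraph V) [DecidableRel G.Adj] (g : ℕ) :
    DecidablePred (IsDiPath G g) := fun p =>
  inferInstanceAs (Decidable (Function.Injective p ∧ ∀ k : Fin g, G.Adj (p k.castSucc) (p k.succ)))

/-- The type of length-`g` directed paths of `G`. -/
abbrev DiPath (G : SimpleGraph V) (g : ℕ) := {p : Fin (g+1) → V // IsDiPath G g p}

/-- The `g`-th-order non-backtracking matrix `B^(g)` of `G`, indexed by the length-`g`
directed paths of `G`: the `(p, q)` entry is `1` if `q k = p (k+1)` for `1 ≤ k ≤ g` and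
`(p 1, …, p (g+1), q (g+1))` is a length-`(g+1)` directed path, and `0` otherwise. -/
def NBM (G : SimpleGraph V) [DecidableRel G.Adj] (g : ℕ) :
    Matrix (DiPath G g) (DiPath G g) ℂ := fun p q =>
  if (∀ k : Fin g, q.1 k.castSucc = p.1 k.succ) ∧
      IsDiPath G (g+1) (Fin.snoc p.1 (q.1 (Fin.last g))) then 1 else 0

/-- The spectral radius of a finite square complex matrix:
the maximum modulus of its eigenvalues (`0` if the index type is empty). -/
noncomputable def specRad {n : Type*} [Fintype n] [DecidableEq n] (X : Matrix n n ℂ) : ℝ≥0∞ :=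
  spectralRadius ℂ X

/-- `c : Fin k → V` is a simple cycle of length `k ≥ 3` in `G`: pairwise distinct vertices
with `c t` adjacent to `c (t+1)` for `1 ≤ t ≤ k-1` and `c k` adjacent to `c 1`. -/
def IsSimpleCycle (G : SimpleGraph V) (k : ℕ) (c : Fin k → V) : Prop :=
  3 ≤ k ∧ Function.Injective c ∧
    ∀ t : Fin k, G.Adj (c t) (c ⟨(t.val + 1) % k, Nat.mod_lt _ t.pos⟩)

/-- The arc relation of the digraph `G^(g)` on the length-`g` directed paths of `G`:
`p → q` exactly when `B^(g)_{p,q} = 1`. -/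
def NBArc (G : SimpleGraph V) (g : ℕ) (p q : DiPath G g) : Prop :=
  (∀ k : Fin g, q.1 k.castSucc = p.1 k.succ) ∧
    IsDiPath G (g+1) (Fin.snoc p.1 (q.1 (Fin.last g)))

/-- The arc relation of the line digraph `L(G^(g-1))` (for `g ≥ 1`), under the identification
of its vertices — the arcs `(i₁,…,i_g) → (i₂,…,i_{g+1})` of `G^(g-1)` — with the length-`g`
directed paths `(i₁,…,i_{g+1})` of `G`: there is an arc `p → q` exactly when the arc
corresponding to `p` ends at the tail of the arc corresponding to `q`, i.e. when
`q k = p (k+1)` for `1 ≤ k ≤ g`. -/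
def LineArc (G : SimpleGraph V) (g : ℕ) (p q : DiPath G g) : Prop :=
  ∀ k : Fin g, q.1 k.castSucc = p.1 k.succ

/-- `c : Fin k → α` is a directed cycle of length `k` with respect to the arc relation `r`:
`k` pairwise distinct vertices with an arc from each to the cyclically next one. -/
def IsDiCycle {α : Type*} (r : α → α → Prop) (k : ℕ) (c : Fin k → α) : Prop :=
  Function.Injective c ∧ ∀ t : Fin k, r (c t) (c ⟨(t.val + 1) % k, Nat.mod_lt _ t.pos⟩)

/-- The type of directed edges of `G`: ordered pairs of adjacent vertices. -/
abbrev DiEdge (G : SimpleGraph V) := {e : V × V // G.Adj e.1 e.2}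

/-- The standard non-backtracking matrix `B = B^(1)`, indexed by directed edges:
`B_{(i,j),(k,l)} = 1` iff `j = k`, `l ≠ i` and `j` is adjacent to `l`. -/
def Bmat (G : SimpleGraph V) [DecidableRel G.Adj] : Matrix (DiEdge G) (DiEdge G) ℂ :=
  fun e f => if e.1.2 = f.1.1 ∧ f.1.2 ≠ e.1.1 ∧ G.Adj e.1.2 f.1.2 then 1 else 0

/-- `(ΔB₁)_{(i,j),(k,l)} = 1` iff `B_{(i,j),(k,l)} = 1` and `i` is adjacent to `l`. -/
def dB1 (G : SimpleGraph V) [DecidableRel G.Adj] : Matrix (DiEdge G) (DiEdge G) ℂ :=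
  fun e f => if (e.1.2 = f.1.1 ∧ f.1.2 ≠ e.1.1 ∧ G.Adj e.1.2 f.1.2) ∧ G.Adj e.1.1 f.1.2
    then 1 else 0

/-- `(ΔB₂)_{(i,j),(k,l)} = 1` iff `l = i` and `j` is adjacent to `k`. -/
def dB2 (G : SimpleGraph V) [DecidableRel G.Adj] : Matrix (DiEdge G) (DiEdge G) ℂ :=
  fun e f => if f.1.2 = e.1.1 ∧ G.Adj e.1.2 f.1.1 then 1 else 0

/-- The diagonal matrix `D_Δ` whose `((i,j),(i,j))` entry is the number of common
neighbours of `i` and `j`. -/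
noncomputable def Ddel (G : SimpleGraph V) [DecidableRel G.Adj] :
    Matrix (DiEdge G) (DiEdge G) ℂ :=
  Matrix.diagonal fun e =>
    ((Finset.univ.filter fun v => G.Adj e.1.1 v ∧ G.Adj e.1.2 v).card : ℂ)

/-- The `8E × 8E` block matrix
`M = [[B, −ΔB₂, D_Δ − I, B − ΔB₁], [I, 0, 0, 0], [0, I, 0, 0], [0, 0, I, 0]]`. -/
noncomputable def Mmat (G : SimpleGraph V) [DecidableRel G.Adj] :
    Matrix ((DiEdge G ⊕ DiEdge G) ⊕ (DiEdge G ⊕ DiEdge G))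
      ((DiEdge G ⊕ DiEdge G) ⊕ (DiEdge G ⊕ DiEdge G)) ℂ :=
  Matrix.fromBlocks
    (Matrix.fromBlocks (Bmat G) (-(dB2 G)) 1 0)
    (Matrix.fromBlocks (Ddel G - 1) (Bmat G - dB1 G) 0 0)
    (Matrix.fromBlocks 0 1 0 0)
    (Matrix.fromBlocks 0 0 1 0)

/-- `x_{(i,j)} = Σ_k ψ_{(i,j,k)}`, the sum over all vertices `k` adjacent to `j` with
`k ≠ i`; equivalently, the sum of `ψ` over all length-2 directed paths starting `(i,j,·)`. -/
noncomputable def xvec (G : SimpleGraph V) [DecidableRel G.Adj] (ψ : DiPath G 2 → ℂ) :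
    DiEdge G → ℂ := fun e =>
  ∑ p ∈ Finset.univ.filter (fun p : DiPath G 2 => p.1 0 = e.1.1 ∧ p.1 1 = e.1.2), ψ p

/-- `y_{(i,j)} = Σ_k ψ_{(i,j,k)}`, the sum over all vertices `k` adjacent to both `i`
and `j`. -/
noncomputable def yvec (G : SimpleGraph V) [DecidableRel G.Adj] (ψ : DiPath G 2 → ℂ) :
    DiEdge G → ℂ := fun e =>
  ∑ p ∈ Finset.univ.filter
    (fun p : DiPath G 2 => p.1 0 = e.1.1 ∧ p.1 1 = e.1.2 ∧ G.Adj e.1.1 (p.1 2)), ψ p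

/-- The block vector `z = (x, λ⁻¹x, λ⁻²x, λ⁻³x)`. -/
noncomputable def blockVec {G : SimpleGraph V} (lam : ℂ) (x : DiEdge G → ℂ) :
    (DiEdge G ⊕ DiEdge G) ⊕ (DiEdge G ⊕ DiEdge G) → ℂ :=
  Sum.elim (Sum.elim x (lam⁻¹ • x)) (Sum.elim ((lam ^ 2)⁻¹ • x) ((lam ^ 3)⁻¹ • x))

/-- The vector `ψ` built from `x`:
`ψ_{(i,j,k)} = (λ²x_{(j,k)} − λx_{(k,i)} + x_{(i,j)})/(λ³+1)` if `i` and `k` are adjacent,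
and `ψ_{(i,j,k)} = λ⁻¹ x_{(j,k)}` if `i` and `k` are not adjacent. -/
noncomputable def psiOf (G : SimpleGraph V) [DecidableRel G.Adj] (lam : ℂ)
    (x : DiEdge G → ℂ) : DiPath G 2 → ℂ := fun p =>
  if h : G.Adj (p.1 0) (p.1 2) then
    (lam ^ 2 * x ⟨(p.1 1, p.1 2), by simpa using p.2.2 1⟩
      - lam * x ⟨(p.1 2, p.1 0), h.symm⟩
      + x ⟨(p.1 0, p.1 1), by simpa using p.2.2 0⟩) / (lam ^ 3 + 1)
  else lam⁻¹ * x ⟨(p.1 1, p.1 2), by simpa using p.2.2 1⟩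


/-!
Let `S` (resp. `T`) be the `0/1` matrix relating each length-`m` path of `G` to the
length-`(m+1)` paths having it as initial (resp. terminal) segment. A length-`(m+1)` path is
the same thing as an arc of the digraph `G^(m)`, so `B^(m) = S Tᵀ`; on the other hand `Tᵀ S`
is the adjacency matrix of the line digraph `L(G^(m))`, which contains `G^(m+1)` as a
subdigraph. Gelfand's formula makes the spectral radius monotone under entrywise domination
by a nonnegative matrix, so `ρ(B^(m+1)) ≤ ρ(Tᵀ S) = ρ(S Tᵀ) = ρ(B^(m))`, the middle equality
because `XY` and `YX` have the same nonzero eigenvalues.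
-/

open scoped NNReal

section SpectralRadius

open Filter Polynomial

variable {n m : Type*} [Fintype n] [DecidableEq n] [Fintype m] [DecidableEq m]

theorem mem_spectrum_mul_comm_of_ne_zero {K : Type*} [Field K] (A : Matrix m n K)
    (B : Matrix n m K) {μ : K} (hμ : μ ≠ 0) (h : μ ∈ spectrum K (A * B)) :
    μ ∈ spectrum K (B * A) := by
  rw [Matrix.mem_spectrum_iff_isRoot_charpoly] at h ⊢
  have := congrArg (eval μ) (Matrix.charpoly_mul_comm' A B)
  simp only [eval_mul, eval_pow, eval_X, h.eq_zero, mul_zero] at this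
  exact (mul_eq_zero.mp this.symm).resolve_left (pow_ne_zero _ hμ)

theorem spectralRadius_mul_comm_le {𝕜 : Type*} [NormedField 𝕜] (A : Matrix m n 𝕜)
    (B : Matrix n m 𝕜) : spectralRadius 𝕜 (A * B) ≤ spectralRadius 𝕜 (B * A) := by
  refine iSup₂_le fun μ hμ => ?_
  rcases eq_or_ne μ 0 with rfl | hμ0
  · simp
  · exact le_iSup₂ (f := fun μ (_ : μ ∈ spectrum 𝕜 (B * A)) => (‖μ‖₊ : ℝ≥0∞)) μ
      (mem_spectrum_mul_comm_of_ne_zero A B hμ0 hμ)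

theorem nnnorm_pow_apply_le {R : Type*} [SeminormedRing R] [NormOneClass R]
    {A : Matrix n n R} {B : Matrix n n ℝ≥0} (h : ∀ i j, ‖A i j‖₊ ≤ B i j) (k : ℕ) (i j : n) :
    ‖(A ^ k) i j‖₊ ≤ (B ^ k) i j := by
  induction k generalizing j with
  | zero => by_cases hij : i = j <;> simp [hij]
  | succ k ih =>
    simp only [pow_succ, Matrix.mul_apply]
    refine (nnnorm_sum_le _ _).trans (Finset.sum_le_sum fun l _ => ?_)
    exact (nnnorm_mul_le _ _).trans (mul_le_mul' (ih l) (h l j))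

attribute [local instance] Matrix.linftyOpNormedAddCommGroup Matrix.linftyOpNormedRing
  Matrix.linftyOpNormedAlgebra

theorem spectralRadius_le_of_nnnorm_le {A : Matrix n n ℂ} {B : Matrix n n ℝ≥0}
    (h : ∀ i j, ‖A i j‖₊ ≤ B i j) :
    spectralRadius ℂ A ≤ spectralRadius ℂ (B.map (algebraMap ℝ≥0 ℂ)) := by
  have hnorm (k : ℕ) : ‖A ^ k‖₊ ≤ ‖B.map (algebraMap ℝ≥0 ℂ) ^ k‖₊ := by
    rw [← Matrix.map_pow, Matrix.linfty_opNNNorm_def, Matrix.linfty_opNNNorm_def]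
    refine Finset.sup_mono_fun fun i _ => Finset.sum_le_sum fun j _ => ?_
    simpa using nnnorm_pow_apply_le h k i j
  calc spectralRadius ℂ A
      ≤ atTop.liminf fun k : ℕ => (‖A ^ k‖₊ : ℝ≥0∞) ^ (1 / k : ℝ) :=
        spectrum.spectralRadius_le_liminf_pow_nnnorm_pow_one_div ℂ A
    _ ≤ atTop.liminf fun k : ℕ => (‖B.map (algebraMap ℝ≥0 ℂ) ^ k‖₊ : ℝ≥0∞) ^ (1 / k : ℝ) :=
        liminf_le_liminf <| .of_forall fun k =>
          ENNReal.rpow_le_rpow (ENNReal.coe_le_coe.mpr (hnorm k)) (by positivity)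
    _ = spectralRadius ℂ (B.map (algebraMap ℝ≥0 ℂ)) :=
        (spectrum.pow_nnnorm_pow_one_div_tendsto_nhds_spectralRadius _).liminf_eq

end SpectralRadius

section FunMatrix

variable (R : Type*) {α β : Type*} [Semiring R] [DecidableEq α]

def funMatrix (f : β → α) : Matrix α β R := Matrix.of fun a p => if f p = a then 1 else 0

variable {R}

theorem funMatrix_map {S : Type*} [Semiring S] (φ : R →+* S) (f : β → α) :
    (funMatrix R f).map φ = funMatrix S f := by
  ext a p
  simp only [funMatrix, Matrix.map_apply, Matrix.of_apply]
  split_ifs <;> simp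

theorem transpose_funMatrix_mul_funMatrix [Fintype α] (f g : β → α) :
    (funMatrix R g)ᵀ * funMatrix R f = Matrix.of fun p q => if g p = f q then 1 else 0 := by
  ext p q
  simp [funMatrix, Matrix.mul_apply]

theorem funMatrix_mul_transpose_funMatrix [Fintype β] (f g : β → α) :
    funMatrix R f * (funMatrix R g)ᵀ =
      Matrix.of fun a b => ((Finset.univ.filter fun p => f p = a ∧ g p = b).card : R) := by
  ext a b
  simp [funMatrix, Matrix.mul_apply, ← ite_and, Finset.sum_boole, and_comm]

end FunMatrix

section Paths

variable {G : SimpleGraph V} {m : ℕ}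

instance [DecidableRel G.Adj] (g : ℕ) : DecidableRel (NBArc G g) := fun _ _ =>
  inferInstanceAs (Decidable (_ ∧ _))

omit [Fintype V] in
instance (g : ℕ) : DecidableRel (LineArc G g) := fun _ _ =>
  inferInstanceAs (Decidable (∀ _, _))

omit [Fintype V] in
theorem NBM_apply [DecidableRel G.Adj] (g : ℕ) (p q : DiPath G g) :
    NBM G g p q = if NBArc G g p q then 1 else 0 :=
  rfl

omit [Fintype V] [DecidableEq V] in
theorem NBArc.lineArc {g : ℕ} {p q : DiPath G g} (h : NBArc G g p q) : LineArc G g p q :=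
  h.1

omit [Fintype V] [DecidableEq V] in
def DiPath.init (p : DiPath G (m + 1)) : DiPath G m :=
  ⟨fun k => p.1 k.castSucc, p.2.1.comp (Fin.castSucc_injective _), fun k => by
    simpa only [Fin.succ_castSucc] using p.2.2 k.castSucc⟩

omit [Fintype V] [DecidableEq V] in
def DiPath.tail (p : DiPath G (m + 1)) : DiPath G m :=
  ⟨fun k => p.1 k.succ, p.2.1.comp (Fin.succ_injective _), fun k => by
    simpa only [← Fin.succ_castSucc] using p.2.2 k.succ⟩

omit [Fintype V] [DecidableEq V] in
theorem lineArc_iff_tail_eq_init {p q : DiPath G (m + 1)} :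
    LineArc G (m + 1) p q ↔ DiPath.tail p = DiPath.init q := by
  simp only [LineArc, DiPath.tail, DiPath.init, Subtype.ext_iff, funext_iff, eq_comm]

omit [Fintype V] [DecidableEq V] in
theorem snoc_init_tail (p : DiPath G (m + 1)) :
    Fin.snoc (DiPath.init p).1 ((DiPath.tail p).1 (Fin.last m)) = p.1 := by
  funext k
  refine Fin.lastCases ?_ (fun j => ?_) k
  · simp [DiPath.tail, Fin.succ_last]
  · simp [DiPath.init]

omit [Fintype V] [DecidableEq V] in
theorem init_eq_and_tail_eq_iff (p : DiPath G (m + 1)) (a b : DiPath G m) :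
    DiPath.init p = a ∧ DiPath.tail p = b ↔
      NBArc G m a b ∧ p.1 = Fin.snoc a.1 (b.1 (Fin.last m)) := by
  constructor
  · rintro ⟨rfl, rfl⟩
    refine ⟨⟨fun k => ?_, ?_⟩, (snoc_init_tail p).symm⟩
    · exact congrArg p.1 (Fin.succ_castSucc k)
    · simpa only [snoc_init_tail] using p.2
  · rintro ⟨hab, hp⟩
    refine ⟨Subtype.ext (funext fun k => ?_), Subtype.ext (funext fun k => ?_)⟩
    · simp [DiPath.init, hp]
    · refine Fin.lastCases ?_ (fun j => ?_) k
      · simp [DiPath.tail, hp, Fin.succ_last]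
      · change p.1 j.castSucc.succ = b.1 j.castSucc
        rw [hp, Fin.succ_castSucc, Fin.snoc_castSucc, hab.1 j]

theorem card_filter_init_eq_and_tail_eq [DecidableRel G.Adj] (a b : DiPath G m) :
    (Finset.univ.filter fun p : DiPath G (m + 1) =>
        DiPath.init p = a ∧ DiPath.tail p = b).card = if NBArc G m a b then 1 else 0 := by
  simp_rw [init_eq_and_tail_eq_iff]
  split_ifs with hab
  · refine Finset.card_eq_one.mpr ⟨⟨_, hab.2⟩, ?_⟩
    ext p
    simp [hab, Subtype.ext_iff]
  · simp [hab]

omit [Fintype V] in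
def initMatrix (R : Type*) [Semiring R] (G : SimpleGraph V) (m : ℕ) :
    Matrix (DiPath G m) (DiPath G (m + 1)) R :=
  funMatrix R DiPath.init

omit [Fintype V] in
def tailMatrix (R : Type*) [Semiring R] (G : SimpleGraph V) (m : ℕ) :
    Matrix (DiPath G m) (DiPath G (m + 1)) R :=
  funMatrix R DiPath.tail

variable [DecidableRel G.Adj] (R : Type*) [Semiring R]

theorem NBM_eq_initMatrix_mul_transpose_tailMatrix :
    NBM G m = initMatrix ℂ G m * (tailMatrix ℂ G m)ᵀ := by
  rw [initMatrix, tailMatrix, funMatrix_mul_transpose_funMatrix]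
  ext a b
  rw [Matrix.of_apply, card_filter_init_eq_and_tail_eq, NBM_apply]
  split_ifs <;> simp

theorem transpose_tailMatrix_mul_initMatrix :
    (tailMatrix R G m)ᵀ * initMatrix R G m =
      Matrix.of fun p q => if LineArc G (m + 1) p q then 1 else 0 := by
  simp only [initMatrix, tailMatrix, transpose_funMatrix_mul_funMatrix,
    lineArc_iff_tail_eq_init]

theorem nnnorm_NBM_apply_le (p q : DiPath G (m + 1)) :
    ‖NBM G (m + 1) p q‖₊ ≤ ((tailMatrix ℝ≥0 G m)ᵀ * initMatrix ℝ≥0 G m) p q := by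
  rw [transpose_tailMatrix_mul_initMatrix, Matrix.of_apply, NBM_apply]
  by_cases h : NBArc G (m + 1) p q
  · simp [h, h.lineArc]
  · simp [h]

end Paths

/-- **Theorem 1(i).** For every `g ≥ 1`, `ρ(B^(g)) ≤ ρ(B^(g-1))`. -/
theorem nbm_specRad_le (G : SimpleGraph V) [DecidableRel G.Adj] (g : ℕ) (hg : 1 ≤ g) :
    specRad (NBM G g) ≤ specRad (NBM G (g - 1)) := by
  obtain ⟨m, rfl⟩ := Nat.exists_eq_add_of_le' hg
  rw [Nat.add_sub_cancel]
  calc specRad (NBM G (m + 1))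
      ≤ spectralRadius ℂ
          (((tailMatrix ℝ≥0 G m)ᵀ * initMatrix ℝ≥0 G m).map (algebraMap ℝ≥0 ℂ)) :=
        spectralRadius_le_of_nnnorm_le nnnorm_NBM_apply_le
    _ = spectralRadius ℂ ((tailMatrix ℂ G m)ᵀ * initMatrix ℂ G m) := by
        simp only [Matrix.map_mul, Matrix.transpose_map, initMatrix, tailMatrix, funMatrix_map]
    _ ≤ spectralRadius ℂ (initMatrix ℂ G m * (tailMatrix ℂ G m)ᵀ) :=
        spectralRadius_mul_comm_le _ _
    _ = specRad (NBM G m) := by rw [specRad, NBM_eq_initMatrix_mul_transpose_tailMatrix]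

end PercNB
end

section
/- (Theorem 1(ii)) Let ℓ ≥ 3 and suppose every simple cycle of G has length at most ℓ. Then for every integer g ≥ ℓ − 1, every complex eigenvalue of B^(g) is 0; equivalently, B^(g) is nilpotent and ρ(B^(g)) = 0. -/
/-!
An entry `B^(g)_{p,q} ≠ 0` is an arc `p → q` of the digraph on length-`g` paths, so if `B^(g)` is
not nilpotent, pigeonhole on the paths produces a closed walk and hence an infinite walk
`R₀ → R₁ → ⋯`. The first vertices `w j` of the `R j` form an infinite walk in `G` in which any
`g + 2` consecutive vertices are distinct, since each `R j` extended by the last vertex of `R (j+1)`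
is a path of length `g + 1`. A shortest return `w a = w (a + e)` of this walk closes a simple
cycle of length `e ≥ g + 2 > ℓ`.
-/

open Matrix ENNReal

namespace IsNilpotent

variable {𝕜 A : Type*} [NormedField 𝕜] [Ring A] [Algebra 𝕜 A] {a : A}

theorem spectralRadius_eq_zero (ha : IsNilpotent a) : spectralRadius 𝕜 a = 0 := by
  obtain ⟨n, hn⟩ := ha
  have h := spectrum.spectralRadius_pow_le (𝕜 := 𝕜) a (n + 1) n.succ_ne_zero
  rwa [_root_.pow_succ a n, hn, zero_mul, spectrum.spectralRadius_zero, nonpos_iff_eq_zero,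
    pow_eq_zero_iff n.succ_ne_zero] at h

theorem eq_zero_of_mem_spectrum (ha : IsNilpotent a) {z : 𝕜} (hz : z ∈ spectrum 𝕜 a) :
    z = 0 := by
  have h : (‖z‖₊ : ℝ≥0∞) ≤ spectralRadius 𝕜 a := le_iSup₂ (α := ℝ≥0∞) z hz
  simpa [ha.spectralRadius_eq_zero] using h

end IsNilpotent

theorem rel_apply_mod_of_closed_chain {α : Type*} {r : α → α → Prop} {c : ℕ → α} {d : ℕ}
    (hd : 0 < d) (hc : ∀ i < d, r (c i) (c (i + 1))) (hcd : c d = c 0) (j : ℕ) :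
    r (c (j % d)) (c ((j + 1) % d)) := by
  have hj := hc (j % d) (Nat.mod_lt j hd)
  rw [← Nat.mod_add_mod j d 1]
  by_cases h : j % d + 1 = d
  · rw [h, Nat.mod_self, ← hcd]
    rwa [h] at hj
  · rwa [Nat.mod_eq_of_lt (a := j % d + 1) (by have := Nat.mod_lt j hd; omega)]

namespace Matrix

variable {ι R : Type*} [Semiring R] [Fintype ι] [DecidableEq ι]

theorem exists_walk_of_pow_apply_ne_zero (M : Matrix ι ι R) {n : ℕ} {p q : ι}
    (h : (M ^ n) p q ≠ 0) :
    ∃ r : ℕ → ι, r 0 = p ∧ r n = q ∧ ∀ i < n, M (r i) (r (i + 1)) ≠ 0 := by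
  induction n generalizing q with
  | zero => exact ⟨fun _ => p, rfl, of_not_not fun hpq => h (one_apply_ne hpq), by simp⟩
  | succ n ih =>
    rw [pow_succ, mul_apply] at h
    obtain ⟨m, -, hm⟩ := Finset.exists_ne_zero_of_sum_ne_zero h
    obtain ⟨r, hr0, hrn, hr⟩ := ih (left_ne_zero_of_mul hm)
    refine ⟨Function.update r (n + 1) q, by simpa using hr0, by simp, fun i hi => ?_⟩
    rcases Nat.lt_succ_iff_lt_or_eq.1 hi with hi | rfl
    · rw [Function.update_of_ne (by omega), Function.update_of_ne (by omega)]
      exact hr i hi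
    · rw [Function.update_of_ne (by omega), Function.update_self, hrn]
      exact right_ne_zero_of_mul hm

theorem isNilpotent_of_not_exists_infinite_walk (M : Matrix ι ι R)
    (h : ¬ ∃ r : ℕ → ι, ∀ i, M (r i) (r (i + 1)) ≠ 0) : IsNilpotent M := by
  refine ⟨Fintype.card ι, ext fun p q => of_not_not fun hpq => h ?_⟩
  obtain ⟨r, -, -, hr⟩ := M.exists_walk_of_pow_apply_ne_zero hpq
  obtain ⟨i, j, hij, hrij⟩ := Fintype.exists_ne_map_eq_of_card_lt
    (fun i : Fin (Fintype.card ι + 1) => r i) (by simp)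
  obtain ⟨s, t, hst, ht, hrst⟩ : ∃ s t, s < t ∧ t ≤ Fintype.card ι ∧ r s = r t := by
    rcases Fin.val_ne_iff.2 hij |>.lt_or_gt with h | h
    · exact ⟨i, j, h, j.is_le, hrij⟩
    · exact ⟨j, i, h, i.is_le, hrij.symm⟩
  exact ⟨fun k => r (s + k % (t - s)),
    rel_apply_mod_of_closed_chain (r := fun x y => M x y ≠ 0) (c := fun k => r (s + k))
    (d := t - s) (by omega) (fun k hk => by simpa [add_assoc] using hr (s + k) (by omega))
    (by simpa [Nat.add_sub_cancel' hst.le] using hrst.symm)⟩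

end Matrix

namespace PercNB

variable {V : Type*}

theorem exists_isSimpleCycle_le_of_adj [Finite V] (G : SimpleGraph V) {m : ℕ} (hm : 3 ≤ m)
    (w : ℕ → V) (hadj : ∀ j, G.Adj (w j) (w (j + 1)))
    (hwin : ∀ j e, 0 < e → e < m → w (j + e) ≠ w j) :
    ∃ k c, IsSimpleCycle G k c ∧ m ≤ k := by
  classical
  have hrep : ∃ e, 0 < e ∧ ∃ a, w (a + e) = w a := by
    obtain ⟨i, j, hij, hw⟩ := Finite.exists_ne_map_eq_of_infinite w
    rcases hij.lt_or_gt with h | h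
    · exact ⟨j - i, by omega, i, by rw [Nat.add_sub_cancel' h.le, hw]⟩
    · exact ⟨i - j, by omega, j, by rw [Nat.add_sub_cancel' h.le, hw]⟩
  obtain ⟨he, a, ha⟩ := Nat.find_spec hrep
  set e := Nat.find hrep
  have hmin : ∀ s t, s < t → t < e → w (a + t) ≠ w (a + s) := fun s t hst hte hw =>
    Nat.find_min hrep (m := t - s) (by omega)
      ⟨by omega, a + s, by rwa [add_assoc, Nat.add_sub_cancel' hst.le]⟩
  have hme : m ≤ e := not_lt.1 fun h => hwin a e he h ha
  refine ⟨e, fun t => w (a + t), ⟨by omega, fun s t hst => ?_, fun t => ?_⟩, hme⟩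
  · rcases lt_trichotomy s t with h | h | h
    · exact absurd hst.symm (hmin s t h t.isLt)
    · exact h
    · exact absurd hst (hmin t s h s.isLt)
  · by_cases ht : t.val + 1 < e
    · simpa [Nat.mod_eq_of_lt ht, add_assoc] using hadj (a + t)
    · have hte : t.val + 1 = e := by omega
      simpa [hte, add_assoc, ha] using hadj (a + t)

section NBWalk

variable {G : SimpleGraph V} {g : ℕ} {R : ℕ → DiPath G g}

theorem apply_eq_of_nbArc_walk (hR : ∀ j, NBArc G g (R j) (R (j + 1))) (j : ℕ)
    (k : Fin (g + 1)) : (R j).1 k = (R (j + k)).1 0 := by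
  induction k using Fin.induction generalizing j with
  | zero => rfl
  | succ k ih => rw [← (hR j).1 k, ih, Fin.val_succ, Fin.val_castSucc, add_right_comm, add_assoc]

theorem snoc_apply_eq_of_nbArc_walk (hR : ∀ j, NBArc G g (R j) (R (j + 1))) (j : ℕ)
    (k : Fin (g + 2)) :
    (Fin.snoc (R j).1 ((R (j + 1)).1 (Fin.last g)) : Fin (g + 2) → V) k = (R (j + k)).1 0 := by
  induction k using Fin.lastCases with
  | last => rw [Fin.snoc_last, apply_eq_of_nbArc_walk hR, Fin.val_last, Fin.val_last,
      add_right_comm, add_assoc]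
  | cast k => rw [Fin.snoc_castSucc, apply_eq_of_nbArc_walk hR, Fin.val_castSucc]

theorem not_exists_nbArc_walk [Finite V] (hg : 1 ≤ g)
    (hcyc : ∀ k c, IsSimpleCycle G k c → k < g + 2) :
    ¬ ∃ R : ℕ → DiPath G g, ∀ j, NBArc G g (R j) (R (j + 1)) := by
  rintro ⟨R, hR⟩
  have hadj : ∀ j, G.Adj ((R j).1 0) ((R (j + 1)).1 0) := fun j => by
    simpa [snoc_apply_eq_of_nbArc_walk hR] using (hR j).2.2 0
  have hwin : ∀ j e, 0 < e → e < g + 2 → (R (j + e)).1 0 ≠ (R j).1 0 := fun j e he heg hw => by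
    have := (hR j).2.1 (a₁ := ⟨e, heg⟩) (a₂ := 0)
      (by rw [snoc_apply_eq_of_nbArc_walk hR, snoc_apply_eq_of_nbArc_walk hR]; simpa using hw)
    exact he.ne' (by simpa using congrArg Fin.val this)
  obtain ⟨k, c, hc, hk⟩ := exists_isSimpleCycle_le_of_adj G (by omega) _ hadj hwin
  exact (hcyc k c hc).not_ge hk

end NBWalk

theorem nbArc_of_NBM_apply_ne_zero [DecidableEq V] {G : SimpleGraph V} [DecidableRel G.Adj]
    {g : ℕ} {p q : DiPath G g} (h : NBM G g p q ≠ 0) : NBArc G g p q :=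
  of_not_not fun hpq => h (if_neg hpq)

theorem isNilpotent_NBM [Fintype V] [DecidableEq V] (G : SimpleGraph V) [DecidableRel G.Adj]
    {g : ℕ} (hg : 1 ≤ g) (hcyc : ∀ k c, IsSimpleCycle G k c → k < g + 2) :
    IsNilpotent (NBM G g) :=
  Matrix.isNilpotent_of_not_exists_infinite_walk _ fun ⟨R, hR⟩ =>
    not_exists_nbArc_walk hg hcyc ⟨R, fun j => nbArc_of_NBM_apply_ne_zero (hR j)⟩

variable [Fintype V] [DecidableEq V]

/-- **Theorem 1(ii).** If every simple cycle of `G` has length at most `ℓ` (where `ℓ ≥ 3`),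
then for every `g ≥ ℓ - 1` every complex eigenvalue of `B^(g)` is `0`; equivalently,
`B^(g)` is nilpotent and `ρ(B^(g)) = 0`. -/
theorem nbm_spectrum_eq_zero (G : SimpleGraph V) [DecidableRel G.Adj] (l : ℕ) (hl : 3 ≤ l)
    (hcyc : ∀ (k : ℕ) (c : Fin k → V), IsSimpleCycle G k c → k ≤ l)
    (g : ℕ) (hg : l - 1 ≤ g) :
    (∀ z ∈ spectrum ℂ (NBM G g), z = 0) ∧
      IsNilpotent (NBM G g) ∧ specRad (NBM G g) = 0 := by
  have hnil : IsNilpotent (NBM G g) :=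
    isNilpotent_NBM G (by omega) fun k c hc => (hcyc k c hc).trans_lt (by omega)
  exact ⟨fun z => hnil.eq_zero_of_mem_spectrum, hnil, hnil.spectralRadius_eq_zero⟩

end PercNB
end

section
/- (Lemma 2) Let g ≥ 1. Under the identification of the vertices of L(G^(g−1)) with the length-g directed paths of G: (a) every arc of G^(g) is an arc of L(G^(g−1)); and (b) an arc of L(G^(g−1)) fails to be an arc of G^(g) if and only if it lies on some directed cycle of length g+1 in L(G^(g−1)). Hence G^(g) is obtained from L(G^(g−1)) by deleting exactly those arcs lying on directed cycles of length g+1. -/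
/-!
If `p → q` is an arc of `L(G^(g-1))`, then `q` is `p` shifted by one with a new last vertex `x`,
and `(p, x)` can only fail to be a length-`(g+1)` path through `x = p₁`: the adjacency of
`p_{g+1}` and `x` is inherited from `q`, and `x` differs from `p₂, …, p_{g+1}` because these are
the other vertices of `q`. If `x = p₁`, then `p` closes up and its `g+1` rotations form a cycle
through `p → q`. Conversely, along `g` consecutive arcs of `L(G^(g-1))` the last vertex of the
first path moves to the first position of the last one, so going around a `(g+1)`-cycle from `q`
back to `p` gives `p₁ = x`.
-/

open Matrix ENNReal

namespace PercNB

variable {V : Type*} {G : SimpleGraph V}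

theorem mk_val_add_one_mod {n : ℕ} (t : Fin (n+1)) :
    (⟨(t.val + 1) % (n+1), Nat.mod_lt _ t.pos⟩ : Fin (n+1)) = t + 1 := by
  ext
  simp [Fin.val_add]

theorem isDiCycle_succ_iff {α : Type*} {r : α → α → Prop} {n : ℕ} {c : Fin (n+1) → α} :
    IsDiCycle r (n+1) c ↔ Function.Injective c ∧ ∀ t, r (c t) (c (t+1)) := by
  simp only [IsDiCycle, mk_val_add_one_mod]

theorem isDiPath_snoc_iff {g : ℕ} {p : Fin (g+1) → V} (hp : IsDiPath G g p) {x : V} :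
    IsDiPath G (g+1) (Fin.snoc p x) ↔ x ∉ Set.range p ∧ G.Adj (p (Fin.last g)) x := by
  simp only [IsDiPath, Fin.snoc_injective_iff, hp.1, true_and, Fin.forall_fin_succ' (n := g),
    Fin.succ_castSucc, Fin.snoc_castSucc, Fin.succ_last, Fin.snoc_last, hp.2, implies_true]

theorem IsDiPath.adj_add_one {g : ℕ} {p : Fin (g+1) → V} (hp : IsDiPath G g p)
    (hclosed : G.Adj (p (Fin.last g)) (p 0)) (i : Fin (g+1)) : G.Adj (p i) (p (i+1)) := by
  cases i using Fin.lastCases with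
  | last => rwa [Fin.last_add_one]
  | cast k => rw [Fin.coeSucc_eq_succ]; exact hp.2 k

theorem LineArc.adj_last {n : ℕ} {p q : DiPath G (n+1)} (hpq : LineArc G (n+1) p q) :
    G.Adj (p.1 (Fin.last (n+1))) (q.1 (Fin.last (n+1))) := by
  have hq := q.2.2 (Fin.last n)
  rwa [hpq (Fin.last n), Fin.succ_last] at hq

theorem nbArc_iff_of_lineArc {n : ℕ} {p q : DiPath G (n+1)} (hpq : LineArc G (n+1) p q) :
    NBArc G (n+1) p q ↔ q.1 (Fin.last (n+1)) ≠ p.1 0 := by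
  have hmem : q.1 (Fin.last (n+1)) ∈ Set.range p.1 ↔ q.1 (Fin.last (n+1)) = p.1 0 := by
    refine ⟨fun ⟨i, hi⟩ => ?_, fun h => ⟨0, h.symm⟩⟩
    cases i using Fin.cases with
    | zero => exact hi.symm
    | succ k =>
      rw [← hpq k] at hi
      exact absurd (q.2.1 hi) (Fin.castSucc_lt_last k).ne
  rw [NBArc, isDiPath_snoc_iff p.2, hmem]
  simp only [hpq.adj_last, and_true]
  exact and_iff_right hpq

def DiPath.rotate {g : ℕ} (p : DiPath G g) (hclosed : G.Adj (p.1 (Fin.last g)) (p.1 0))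
    (t : Fin (g+1)) : DiPath G g :=
  ⟨fun k => p.1 (t + k), p.2.1.comp (add_right_injective t), fun k => by
    simpa only [← Fin.coeSucc_eq_succ, add_assoc] using
      p.2.adj_add_one hclosed (t + k.castSucc)⟩

theorem DiPath.rotate_zero {g : ℕ} (p : DiPath G g)
    (hclosed : G.Adj (p.1 (Fin.last g)) (p.1 0)) : p.rotate hclosed 0 = p :=
  Subtype.ext (funext fun k => congrArg p.1 (zero_add k))

theorem DiPath.isDiCycle_rotate {g : ℕ} (p : DiPath G g)
    (hclosed : G.Adj (p.1 (Fin.last g)) (p.1 0)) :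
    IsDiCycle (LineArc G g) (g+1) (p.rotate hclosed) := by
  refine isDiCycle_succ_iff.2 ⟨fun s t hst => ?_, fun t k => ?_⟩
  · have h0 := congrArg (fun r : DiPath G g => r.1 0) hst
    simpa [DiPath.rotate] using p.2.1 h0
  · simp only [DiPath.rotate, ← Fin.coeSucc_eq_succ, add_assoc, add_comm (1 : Fin (g+1))]

theorem DiPath.rotate_one_eq {g : ℕ} {p q : DiPath G g}
    (hclosed : G.Adj (p.1 (Fin.last g)) (p.1 0)) (hpq : LineArc G g p q)
    (hqp : q.1 (Fin.last g) = p.1 0) : p.rotate hclosed 1 = q := by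
  refine Subtype.ext (funext fun k => ?_)
  cases k using Fin.lastCases with
  | last => simp [DiPath.rotate, add_comm (1 : Fin (g+1)), hqp]
  | cast k => simp [DiPath.rotate, add_comm (1 : Fin (g+1)), Fin.coeSucc_eq_succ, hpq k]

theorem apply_sub_eq_apply_last_of_shifts {α : Type*} {g : ℕ} {w : ℕ → Fin (g+1) → α}
    (hw : ∀ i (k : Fin g), w (i+1) k.castSucc = w i k.succ) :
    ∀ j (hj : j ≤ g), w j ⟨g - j, by omega⟩ = w 0 (Fin.last g)
  | 0, _ => rfl
  | j + 1, hj => by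
    have hstep := hw j ⟨g - (j+1), by omega⟩
    simp only [Fin.castSucc_mk, Fin.succ_mk] at hstep
    rw [hstep, ← apply_sub_eq_apply_last_of_shifts hw j (by omega)]
    congr 2
    omega

open Fin.NatCast in
theorem head_eq_last_of_lineArc_closedWalk {g : ℕ} {c : Fin (g+1) → DiPath G g}
    (hc : ∀ t, LineArc G g (c t) (c (t+1))) (t : Fin (g+1)) :
    (c t).1 0 = (c (t+1)).1 (Fin.last g) := by
  have hwalk := apply_sub_eq_apply_last_of_shifts (w := fun i => (c (t + 1 + i)).1) (fun i k => by
    simpa [add_assoc] using hc (t + 1 + i) k) g le_rfl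
  simpa [Fin.natCast_eq_last, add_assoc, add_comm (1 : Fin (g+1)), Fin.last_add_one] using hwalk

end PercNB

namespace PercNB

variable {V : Type*} [Fintype V] [DecidableEq V]

theorem lineArc_eq_nbArc_del_cycles_general (G : SimpleGraph V) (g : ℕ)
    (hg : 1 ≤ g) :
    (∀ p q : DiPath G g, NBArc G g p q → LineArc G g p q) ∧
    (∀ p q : DiPath G g, LineArc G g p q →
      (¬ NBArc G g p q ↔
        ∃ c : Fin (g + 1) → DiPath G g, IsDiCycle (LineArc G g) (g + 1) c ∧
          ∃ t : Fin (g + 1),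
            c t = p ∧ c ⟨(t.val + 1) % (g + 1), Nat.mod_lt _ t.pos⟩ = q)) := by
  obtain ⟨n, rfl⟩ : ∃ n, g = n + 1 := ⟨g - 1, by omega⟩
  refine ⟨fun p q h => h.1, fun p q hpq => ?_⟩
  simp only [nbArc_iff_of_lineArc hpq, not_not, mk_val_add_one_mod]
  constructor
  · intro hqp
    have hclosed : G.Adj (p.1 (Fin.last (n+1))) (p.1 0) := hqp ▸ hpq.adj_last
    exact ⟨p.rotate hclosed, p.isDiCycle_rotate hclosed, 0, p.rotate_zero hclosed,
      by rw [zero_add]; exact DiPath.rotate_one_eq hclosed hpq hqp⟩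
  · rintro ⟨c, hc, t, rfl, rfl⟩
    exact (head_eq_last_of_lineArc_closedWalk (isDiCycle_succ_iff.1 hc).2 t).symm

/-- **Lemma 2.** For `g ≥ 1`, under the identification of the vertices of `L(G^(g-1))` with
the length-`g` directed paths of `G`: (a) every arc of `G^(g)` is an arc of `L(G^(g-1))`;
and (b) an arc of `L(G^(g-1))` fails to be an arc of `G^(g)` if and only if it lies on some
directed cycle of length `g+1` in `L(G^(g-1))`. -/
theorem lineArc_eq_nbArc_del_cycles (G : SimpleGraph V) [DecidableRel G.Adj] (g : ℕ)
    (hg : 1 ≤ g) :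
    (∀ p q : DiPath G g, NBArc G g p q → LineArc G g p q) ∧
    (∀ p q : DiPath G g, LineArc G g p q →
      (¬ NBArc G g p q ↔
        ∃ c : Fin (g + 1) → DiPath G g, IsDiCycle (LineArc G g) (g + 1) c ∧
          ∃ t : Fin (g + 1),
            c t = p ∧ c ⟨(t.val + 1) % (g + 1), Nat.mod_lt _ t.pos⟩ = q)) :=
  lineArc_eq_nbArc_del_cycles_general G g hg

end PercNB
end

section
/- Let g ≥ 1. If a directed cycle in L(G^(g−1)) contains an arc from the length-g directed path (i₁, …, i_{g+1}) to the length-g directed path (i₂, …, i_{g+1}, j) with j ≠ i₁, then that cycle has length at least g+2. -/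
open Matrix ENNReal

namespace PercNB

variable {V : Type*} [Fintype V] [DecidableEq V]

/-- For `g ≥ 1`, if a directed cycle in `L(G^(g-1))` contains an arc from the length-`g`
directed path `(i₁, …, i_{g+1})` to the length-`g` directed path `(i₂, …, i_{g+1}, j)` with
`j ≠ i₁`, then that cycle has length at least `g+2`. -/
theorem lineArc_cycle_long (G : SimpleGraph V) [DecidableRel G.Adj] (g : ℕ) (hg : 1 ≤ g)
    (k : ℕ) (c : Fin k → DiPath G g) (hc : IsDiCycle (LineArc G g) k c) (t : Fin k)
    (hne : (c ⟨(t.val + 1) % k, Nat.mod_lt _ t.pos⟩).1 (Fin.last g) ≠ (c t).1 0) :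
    g + 2 ≤ k := by
  obtain ⟨hcinj, harc⟩ := hc
  have hk : 0 < k := t.pos
  set idx : ℕ → Fin k := fun n => ⟨n % k, Nat.mod_lt _ hk⟩ with hidx
  have step : ∀ s : ℕ, ∀ i : Fin g,
      (c (idx (s+1))).1 i.castSucc = (c (idx s)).1 i.succ := by
    intro s i
    have h := harc (idx s) i
    have he : (⟨((idx s).val + 1) % k, Nat.mod_lt _ (idx s).pos⟩ : Fin k) = idx (s+1) := by
      apply Fin.ext
      simp [hidx, Nat.mod_add_mod]
    rwa [he] at h
  have W : ∀ j : ℕ, ∀ hj : j ≤ g, ∀ s : ℕ,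
      (c (idx s)).1 ⟨j, by omega⟩ = (c (idx (s + j))).1 ⟨0, by omega⟩ := by
    intro j
    induction j with
    | zero => intro _ s; rfl
    | succ j ih =>
      intro hj s
      have hjg : j < g := by omega
      have h1 : (c (idx s)).1 ⟨j+1, by omega⟩ = (c (idx (s+1))).1 ⟨j, by omega⟩ :=
        (step s ⟨j, hjg⟩).symm
      have h2 := ih (by omega) (s+1)
      have h3 : s + 1 + j = s + (j + 1) := by omega
      rw [h1, h2, h3]
  have h0 : idx t.val = t := Fin.ext (Nat.mod_eq_of_lt t.isLt)
  by_contra hlt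
  push_neg at hlt
  rcases Nat.lt_or_ge k (g+1) with hk1 | hk2
  · -- k ≤ g
    have hkg : k ≤ g := by omega
    have h := W k hkg t.val
    have he : idx (t.val + k) = idx t.val := by
      apply Fin.ext
      simp [hidx, Nat.add_mod_right]
    rw [he, h0] at h
    have := (c t).2.1 h
    have : k = 0 := congrArg Fin.val this
    omega
  · -- k = g + 1
    have hkg : k = g + 1 := by omega
    have h := W g le_rfl (t.val + 1)
    have he : idx (t.val + 1 + g) = idx t.val := by
      apply Fin.ext
      have : t.val + 1 + g = t.val + k := by omega
      simp [hidx, this, Nat.add_mod_right]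
    rw [he, h0] at h
    apply hne
    have hlast : (Fin.last g) = (⟨g, by omega⟩ : Fin (g+1)) := rfl
    have hidx1 : (⟨(t.val + 1) % k, Nat.mod_lt _ t.pos⟩ : Fin k) = idx (t.val + 1) := rfl
    have h0' : (⟨0, by omega⟩ : Fin (g+1)) = 0 := rfl
    rw [hlast, hidx1, h, h0']

end PercNB
end

section
/- Let g ≥ 1. If the directed graph G^(g) contains a directed cycle, then G contains a simple cycle of length at least g+2. Consequently, if every simple cycle of G has length at most g+1, then G^(g) is a directed acyclic graph. -/
open Matrix ENNReal

namespace PercNB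

variable {V : Type*} [Fintype V] [DecidableEq V]

private lemma window_cycle (G : SimpleGraph V) (g : ℕ) (hg : 1 ≤ g) (u : ℕ → V)
    (k : ℕ) (hk : 0 < k) (hper : u k = u 0)
    (hwin : ∀ n, IsDiPath G (g+1) (fun i : Fin (g+2) => u (n + i.val))) :
    ∃ (m : ℕ) (d : Fin m → V), IsSimpleCycle G m d ∧ g + 2 ≤ m := by
  classical
  have adj1 : ∀ n, G.Adj (u n) (u (n+1)) := by
    intro n
    have h := (hwin n).2 ⟨0, by omega⟩
    simpa using h
  have hex : ∃ d, 0 < d ∧ ∃ n, u (n + d) = u n := ⟨k, hk, 0, by simpa using hper⟩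
  obtain ⟨hdpos, n, hn⟩ := Nat.find_spec hex
  set d := Nat.find hex with hdd
  have hmin : ∀ d' : ℕ, d' < d → ¬ (0 < d' ∧ ∃ n, u (n + d') = u n) :=
    fun d' h => Nat.find_min hex h
  have hgd : g + 2 ≤ d := by
    by_contra h
    push_neg at h
    have h2 := (hwin n).1 (a₁ := ⟨d, by omega⟩) (a₂ := ⟨0, by omega⟩) (by simpa using hn)
    simp [Fin.ext_iff] at h2
    omega
  refine ⟨d, fun t => u (n + t.val), ⟨by omega, ?_, ?_⟩, hgd⟩
  · -- injectivity
    have key : ∀ s t : Fin d, s.val < t.val → u (n + s.val) ≠ u (n + t.val) := by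
      intro s t hst heq
      refine hmin (t.val - s.val) (by omega) ⟨by omega, n + s.val, ?_⟩
      rw [show n + s.val + (t.val - s.val) = n + t.val by omega]
      exact heq.symm
    intro s t heq
    rcases lt_trichotomy s.val t.val with h | h | h
    · exact absurd heq (key s t h)
    · exact Fin.ext h
    · exact absurd heq.symm (key t s h)
  · intro t
    show G.Adj (u (n + t.val)) (u (n + (t.val + 1) % d))
    rcases Nat.lt_or_ge (t.val + 1) d with h | h
    · rw [Nat.mod_eq_of_lt h, show n + (t.val + 1) = n + t.val + 1 by omega]
      exact adj1 _
    · have htd : t.val + 1 = d := by omega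
      have hmod : (t.val + 1) % d = 0 := by rw [htd]; exact Nat.mod_self d
      rw [hmod]
      have h2 := adj1 (n + t.val)
      rw [show n + t.val + 1 = n + d by omega, hn] at h2
      simpa using h2

private lemma extract_cycle (G : SimpleGraph V) [DecidableRel G.Adj] (g : ℕ) (hg : 1 ≤ g)
    (k : ℕ) (hk : 0 < k) (c : Fin k → DiPath G g) (hc : IsDiCycle (NBArc G g) k c) :
    ∃ (m : ℕ) (d : Fin m → V), IsSimpleCycle G m d ∧ g + 2 ≤ m := by
  classical
  set f : ℕ → (Fin (g+1) → V) := fun n => (c ⟨n % k, Nat.mod_lt _ hk⟩).1 with hf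
  set u : ℕ → V := fun n => f n 0 with hu
  have arcfact : ∀ n : ℕ, NBArc G g (c ⟨n % k, Nat.mod_lt _ hk⟩)
      (c ⟨(n+1) % k, Nat.mod_lt _ hk⟩) := by
    intro n
    have h := hc.2 ⟨n % k, Nat.mod_lt _ hk⟩
    have he : ((⟨(n % k + 1) % k, Nat.mod_lt _ hk⟩ : Fin k)) =
        (⟨(n+1) % k, Nat.mod_lt _ hk⟩ : Fin k) := by
      ext
      exact Nat.mod_add_mod n k 1
    rw [← he]
    exact h
  have shift : ∀ n (j : Fin g), f (n+1) j.castSucc = f n j.succ :=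
    fun n j => (arcfact n).1 j
  have valA : ∀ i : ℕ, ∀ _ : i ≤ g, ∀ n, f n ⟨i, by omega⟩ = u (n + i) := by
    intro i
    induction i with
    | zero => intro _ n; simp [hu]
    | succ i ih =>
      intro hi n
      have hig : i < g := hi
      have h1 : f n ⟨i+1, by omega⟩ = f (n+1) ⟨i, by omega⟩ := by
        have h2 := shift n ⟨i, hig⟩
        have e1 : (⟨i, hig⟩ : Fin g).castSucc = (⟨i, by omega⟩ : Fin (g+1)) := rfl
        have e2 : (⟨i, hig⟩ : Fin g).succ = (⟨i+1, by omega⟩ : Fin (g+1)) := rfl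
        rw [e1, e2] at h2
        exact h2.symm
      rw [h1, ih (by omega) (n+1)]
      congr 1
      omega
  have hwin : ∀ n, IsDiPath G (g+1) (fun i : Fin (g+2) => u (n + i.val)) := by
    intro n
    have h : IsDiPath G (g+1) (Fin.snoc (f n) (f (n+1) (Fin.last g))) := (arcfact n).2
    have he : (Fin.snoc (f n) (f (n+1) (Fin.last g)) : Fin (g+1+1) → V)
        = fun i : Fin (g+2) => u (n + i.val) := by
      funext i
      rcases Nat.lt_or_ge i.val (g+1) with hlt | hge
      · have hi : i = Fin.castSucc ⟨i.val, hlt⟩ := rfl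
        rw [hi, Fin.snoc_castSucc]
        exact valA i.val (by omega) n
      · have hi : i = Fin.last (g+1) := by
          ext; simp [Fin.last]; omega
        rw [hi, Fin.snoc_last]
        have h3 : Fin.last g = (⟨g, by omega⟩ : Fin (g+1)) := rfl
        rw [h3, valA g le_rfl (n+1)]
        congr 1
        simp [Fin.last]
        omega
    rw [he] at h
    exact h
  have hper : u k = u 0 := by
    have : k % k = 0 % k := by simp
    simp only [hu, hf, this]
  exact window_cycle G g hg u k hk hper hwin

/-- For `g ≥ 1`, if the digraph `G^(g)` contains a directed cycle, then `G` contains a simple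
cycle of length at least `g+2`; consequently, if every simple cycle of `G` has length at most
`g+1`, then `G^(g)` is a directed acyclic graph. -/
theorem nbArc_cycle_and_dag (G : SimpleGraph V) [DecidableRel G.Adj] (g : ℕ) (hg : 1 ≤ g) :
    ((∃ (k : ℕ), 0 < k ∧ ∃ c : Fin k → DiPath G g, IsDiCycle (NBArc G g) k c) →
      ∃ (m : ℕ) (d : Fin m → V), IsSimpleCycle G m d ∧ g + 2 ≤ m) ∧
    ((∀ (m : ℕ) (d : Fin m → V), IsSimpleCycle G m d → m ≤ g + 1) →
      ¬ ∃ (k : ℕ), 0 < k ∧ ∃ c : Fin k → DiPath G g, IsDiCycle (NBArc G g) k c) := by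
  constructor
  · rintro ⟨k, hk, c, hc⟩
    exact extract_cycle G g hg k hk c hc
  · rintro hmax ⟨k, hk, c, hc⟩
    obtain ⟨m, d, hsc, hm⟩ := extract_cycle G g hg k hk c hc
    have := hmax m d hsc
    omega

end PercNB
end

section
/- Let ℓ ≥ 3 and suppose G has no simple cycle of length exactly ℓ. Then L(G^(ℓ−2)) contains no directed cycle of length ℓ, and under the identification of the vertices of L(G^(ℓ−2)) with the length-(ℓ−1) directed paths of G, the digraphs L(G^(ℓ−2)) and G^(ℓ−1) have exactly the same arc set. -/
open Matrix ENNReal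

namespace PercNB

variable {V : Type*} [Fintype V] [DecidableEq V]

private lemma adj_mk {g : ℕ} {G : SimpleGraph V} (p : DiPath G g) {i : ℕ} (h : i < g)
    (h1 : i < g + 1) (h2 : i + 1 < g + 1) :
    G.Adj (p.1 ⟨i, h1⟩) (p.1 ⟨i+1, h2⟩) := by
  simpa [Fin.castSucc_mk, Fin.succ_mk] using p.2.2 ⟨i, h⟩

private lemma val_one_aux (m : ℕ) : ((1 : Fin (m+3)) : ℕ) = 1 := Fin.val_one (m+1)

private lemma shift_eq {G : SimpleGraph V} (m : ℕ)
    (c : Fin (m+3) → DiPath G (m+2))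
    (harc : ∀ t : Fin (m+3), LineArc G (m+2) (c t) (c (t+1))) :
    ∀ (j t : Fin (m+3)), (c t).1 j = (c (t + j)).1 0 := by
  intro j
  induction j using Fin.induction with
  | zero => intro t; simp
  | succ k ih =>
    intro t
    have h1 : (c t).1 k.succ = (c (t+1)).1 k.castSucc := (harc t k).symm
    have h2 := ih (t + 1)
    have h3 : t + 1 + (k.castSucc : Fin (m+3)) = t + k.succ := by
      apply Fin.ext
      simp only [Fin.add_def, val_one_aux, Nat.mod_add_mod, Fin.val_succ, Fin.coe_castSucc]
      congr 1
      omega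
    rw [h1, h2, h3]

private lemma lineArc_to_nbArc {G : SimpleGraph V} (m : ℕ)
    (hcyc : ∀ c : Fin (m+3) → V, ¬ IsSimpleCycle G (m+3) c)
    (p q : DiPath G (m+2)) (h : LineArc G (m+2) p q) : NBArc G (m+2) p q := by
  set v := q.1 (Fin.last (m+2)) with hvdef
  have key : ∀ k : Fin (m+2), q.1 k.castSucc = p.1 k.succ := h
  have hlastp : p.1 (Fin.last (m+2)) = q.1 (Fin.castSucc (Fin.last (m+1))) := by
    rw [← Fin.succ_last]; exact (key (Fin.last (m+1))).symm
  have hadjlast : G.Adj (p.1 (Fin.last (m+2))) v := by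
    rw [hlastp]
    have hq := q.2.2 (Fin.last (m+1))
    rwa [Fin.succ_last] at hq
  have hv0 : v ≠ p.1 0 := by
    intro hv0
    apply hcyc p.1
    refine ⟨by omega, p.2.1, ?_⟩
    intro t
    by_cases ht : t.val < m + 2
    · have hmod : (t.val+1) % (m+3) = t.val+1 := Nat.mod_eq_of_lt (by omega)
      have e : (⟨(t.val+1) % (m+3), Nat.mod_lt _ t.pos⟩ : Fin (m+3))
          = ⟨t.val+1, by omega⟩ := Fin.ext hmod
      rw [e]
      exact adj_mk p ht t.isLt (by omega)
    · have hte : t.val = m + 2 := by omega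
      have hmod : (t.val+1) % (m+3) = 0 := by rw [hte]; exact Nat.mod_self _
      have e : (⟨(t.val+1) % (m+3), Nat.mod_lt _ t.pos⟩ : Fin (m+3)) = 0 := Fin.ext hmod
      have e2 : t = Fin.last (m+2) := Fin.ext hte
      rw [e, e2, ← hv0]
      exact hadjlast
  have hvrange : ∀ j : Fin (m+3), v ≠ p.1 j := by
    intro j
    rcases Fin.eq_zero_or_eq_succ j with rfl | ⟨k, rfl⟩
    · exact hv0
    · rw [← key k]
      intro heq
      have hlk : Fin.last (m+2) = k.castSucc := q.2.1 heq
      exact absurd hlk (Fin.castSucc_lt_last k).ne'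
  refine ⟨h, ?_, ?_⟩
  · intro a b hab
    induction a using Fin.lastCases with
    | last =>
      induction b using Fin.lastCases with
      | last => rfl
      | cast i =>
        rw [Fin.snoc_last, Fin.snoc_castSucc] at hab
        exact absurd hab (hvrange i)
    | cast i =>
      induction b using Fin.lastCases with
      | last =>
        rw [Fin.snoc_last, Fin.snoc_castSucc] at hab
        exact absurd hab.symm (hvrange i)
      | cast j =>
        rw [Fin.snoc_castSucc, Fin.snoc_castSucc] at hab
        exact congrArg Fin.castSucc (p.2.1 hab)
  · intro k
    induction k using Fin.lastCases with
    | last =>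
      rw [Fin.succ_last, Fin.snoc_last, Fin.snoc_castSucc]
      exact hadjlast
    | cast i =>
      rw [Fin.succ_castSucc, Fin.snoc_castSucc, Fin.snoc_castSucc]
      exact p.2.2 i

private lemma no_dicycle {G : SimpleGraph V} (m : ℕ)
    (hcyc : ∀ c : Fin (m+3) → V, ¬ IsSimpleCycle G (m+3) c)
    (c : Fin (m+3) → DiPath G (m+2)) : ¬ IsDiCycle (LineArc G (m+2)) (m+3) c := by
  rintro ⟨hinj, harc0⟩
  have hidx : ∀ t : Fin (m+3),
      (⟨(t.val+1) % (m+3), Nat.mod_lt _ t.pos⟩ : Fin (m+3)) = t + 1 := by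
    intro t
    apply Fin.ext
    simp [Fin.add_def, val_one_aux]
  have harc : ∀ t : Fin (m+3), LineArc G (m+2) (c t) (c (t+1)) := by
    intro t
    have h := harc0 t
    rwa [hidx t] at h
  have shift := shift_eq m c harc
  apply hcyc (c 0).1
  refine ⟨by omega, (c 0).2.1, ?_⟩
  intro t
  rw [hidx t]
  have h1 : (c 0).1 t = (c t).1 0 := by rw [shift t 0, zero_add]
  have h2 : (c 0).1 (t + 1) = (c (t + 1)).1 0 := by rw [shift (t+1) 0, zero_add]
  have h3 : (c t).1 1 = (c (t + 1)).1 0 := by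
    have := shift 1 t
    rwa [show ((1 : Fin (m+3)) : Fin (m+3)) = 1 from rfl] at this
  rw [h1, h2, ← h3]
  have hone : (1 : Fin (m+3)) = (⟨1, by omega⟩ : Fin (m+3)) := Fin.ext (val_one_aux m)
  rw [hone]
  exact adj_mk (c t) (show 0 < m+2 by omega) (by omega) (by omega)

/-- If `ℓ ≥ 3` and `G` has no simple cycle of length exactly `ℓ`, then `L(G^(ℓ-2))` contains
no directed cycle of length `ℓ`, and—under the identification of the vertices of `L(G^(ℓ-2))`
with the length-`(ℓ-1)` directed paths of `G`—the digraphs `L(G^(ℓ-2))` and `G^(ℓ-1)` have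
exactly the same arc set. -/
theorem lineArc_eq_nbArc_of_no_cycle (G : SimpleGraph V) [DecidableRel G.Adj] (l : ℕ)
    (hl : 3 ≤ l) (hcyc : ∀ c : Fin l → V, ¬ IsSimpleCycle G l c) :
    (∀ c : Fin l → DiPath G (l - 1), ¬ IsDiCycle (LineArc G (l - 1)) l c) ∧
    (∀ p q : DiPath G (l - 1), LineArc G (l - 1) p q ↔ NBArc G (l - 1) p q) := by
  obtain ⟨m, rfl⟩ : ∃ m, l = m + 3 := ⟨l - 3, by omega⟩
  exact ⟨fun c => no_dicycle m hcyc c,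
    fun p q => ⟨fun h => lineArc_to_nbArc m hcyc p q h, fun h => h.1⟩⟩

end PercNB
end
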